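/- Let u, v, w ∈ ℝ⁴ be unit spacelike vectors such that: ⟨u,v⟩ ≤ −1 (the disks of u and v are disjoint or tangent), −1 < ⟨w,v⟩ < 0 (the disks of w and v overlap at an angle less than π/2), and ⟨u,w⟩ < 0 (the inversive distance between the disks of u and w is positive, as required by shallowness). Set μ = ⟨w,v⟩ / (⟨w,v⟩ − 1) and ŵ = (μ−1)w − μv. Then for every λ ∈ ℝ such that p = (λ−1)u − λv is lightlike, one has ⟨p, ŵ⟩ < 0. (That is, the ideal or hyperideal vertex determined by the pair (u, v) is not contained in the disk in the pencil of w and v orthogonal to the disk of v; this is the properness inequality needed to show that globally shallow convex hyperbolic circle polyhedra are proper.) -/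
import Mathlib


/-- The Lorentz (Minkowski) inner product on ℝ⁴. -/
def lor (u v : Fin 4 → ℝ) : ℝ :=
  u 0 * v 0 + u 1 * v 1 + u 2 * v 2 - u 3 * v 3

/-- A vector is lightlike if it is nonzero and Lorentz-null. -/
def IsLightlike (u : Fin 4 → ℝ) : Prop := u ≠ 0 ∧ lor u u = 0

lemma lor_comm (u v : Fin 4 → ℝ) : lor u v = lor v u := by
  simp [lor]; ring

lemma lor_expand (a b c d : ℝ) (u v w x : Fin 4 → ℝ) :
    lor (a • u - b • v) (c • w - d • x)
      = a * c * lor u w - a * d * lor u x - b * c * lor v w + b * d * lor v x := by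
  simp [lor, Pi.smul_apply, Pi.sub_apply, smul_eq_mul]; ring

theorem stmt_8 (u v w : Fin 4 → ℝ)
    (hu : lor u u = 1) (hv : lor v v = 1) (hw : lor w w = 1)
    (huv : lor u v ≤ -1)
    (hwv1 : -1 < lor w v) (hwv2 : lor w v < 0)
    (huw : lor u w < 0) :
    ∀ l : ℝ, IsLightlike ((l - 1) • u - l • v) →
      lor ((l - 1) • u - l • v)
        ((lor w v / (lor w v - 1) - 1) • w - (lor w v / (lor w v - 1)) • v)
      < 0 := by
  intro l hp
  obtain ⟨-, hpp⟩ := hp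
  set a := lor u v with ha
  set b := lor w v with hb
  set c := lor u w with hc
  have hvu : lor v u = a := (lor_comm v u)
  have hvw : lor v w = b := by rw [lor_comm]
  have hb1 : b - 1 < 0 := by linarith
  have hb1' : b - 1 ≠ 0 := ne_of_lt hb1
  -- expand lightlike condition
  rw [lor_expand, hu, hv, hvu] at hpp
  -- l < 1
  have hl : l < 1 := by nlinarith [sq_nonneg (2*l - 1), sq_nonneg l, sq_nonneg (l-1)]
  rw [lor_expand, hv, hvw, ← hc, ← ha]
  have key : (l-1)*(b/(b-1)-1)*c - (l-1)*(b/(b-1))*a - l*(b/(b-1)-1)*b + l*(b/(b-1))*1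
      = (l-1)*(c - a*b)/(b-1) := by
    field_simp
    ring
  rw [key]
  apply div_neg_of_pos_of_neg _ hb1
  have h1 : c - a*b < 0 := by nlinarith
  have h2 : l - 1 < 0 := by linarith
  exact mul_pos_of_neg_of_neg h2 h1
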